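/- arXiv:2006.04616 — 2 statements merged into one kernel-verified Lean document; each statement's English description precedes it below -/
import Mathlib

section
/- Let A1, A2 be monotone access structures on P1 and P2 with p_z ∈ P1, p_z ∉ P2, and assume P1 ∩ P2 = ∅. Then a set Q ⊆ (P1 \ {p_z}) ∪ P2 is minimal in the insertion A1(p_z → A2) only if either Q ⊆ P1 \ {p_z} and Q ∈ A1, or Q = (Q1 \ {p_z}) ∪ Q2 for some Q1 ∈ A1 with p_z ∈ Q1 and Q2 ∈ A2. -/
/-! Since `pz ∉ Q`, `Q` splits as `(Q ∩ P1) ∪ (Q ∩ P2)`. If `Q ∩ P1 ∈ A1`,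
then `Q ∩ P1` already lies in the insertion, so minimality forces `Q ⊆ P1`. Otherwise
`Q1 := (Q ∩ P1) ∪ {pz}` and `Q2 := Q ∩ P2` are the required witnesses. -/

namespace Set

variable {α : Type*}

theorem subset_of_minimal_of_inter_mem {S : Set (Set α)} {Q P : Set α}
    (hQ : Minimal (· ∈ S) Q) (hQP : Q ∩ P ∈ S) : Q ⊆ P :=
  inter_eq_left.1 (hQ.eq_of_subset hQP inter_subset_left)

theorem union_singleton_diff_union_inter_eq {Q P1 P2 : Set α} {p : α}
    (hp : p ∉ Q) (hQ : Q ⊆ P1 ∪ P2) : (Q ∩ P1 ∪ {p}) \ {p} ∪ Q ∩ P2 = Q := by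
  rw [union_singleton, insert_sdiff_self_of_notMem (fun h => hp h.1), ← inter_union_distrib_left,
    inter_eq_left.2 hQ]

end Set

theorem insertion_minimal_sets_general {α : Type*} (P1 P2 : Set α) (A1 A2 : Set (Set α))
    (pz : α) (hz2 : pz ∉ P2)
    (A3 : Set (Set α))
    (hA3 : ∀ A : Set α, A ∈ A3 ↔
      (A ∩ P1 ∈ A1 ∨ ((A ∩ P1) ∪ {pz} ∈ A1 ∧ A ∩ P2 ∈ A2)))
    (Q : Set α) (hQsub : Q ⊆ (P1 \ {pz}) ∪ P2)
    (hQmin : Q ∈ A3 ∧ ∀ Q' : Set α, Q' ⊂ Q → Q' ∉ A3) :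
    (Q ⊆ P1 \ {pz} ∧ Q ∈ A1) ∨
    (∃ Q1 ∈ A1, pz ∈ Q1 ∧ ∃ Q2 ∈ A2, Q = (Q1 \ {pz}) ∪ Q2) := by
  have hmin : Minimal (· ∈ A3) Q := minimal_iff_forall_lt.2 ⟨hQmin.1, fun Q' => hQmin.2 Q'⟩
  have hpz : pz ∉ Q := fun h => (hQsub h).elim (fun h => h.2 rfl) (fun h => hz2 h)
  rcases (hA3 Q).1 hQmin.1 with hQ1 | ⟨hQ1, hQ2⟩
  · have hQP1 : Q ⊆ P1 :=
      Set.subset_of_minimal_of_inter_mem hmin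
        ((hA3 _).2 (Or.inl (by rwa [Set.inter_assoc, Set.inter_self])))
    exact Or.inl ⟨Set.subset_sdiff_singleton hQP1 hpz, Set.inter_eq_left.2 hQP1 ▸ hQ1⟩
  · refine Or.inr ⟨Q ∩ P1 ∪ {pz}, hQ1, Or.inr rfl, Q ∩ P2, hQ2, ?_⟩
    exact (Set.union_singleton_diff_union_inter_eq hpz
      (hQsub.trans (Set.union_subset_union_left _ Set.sdiff_subset))).symm

/-- A set `Q` minimal in the insertion `A1(p_z → A2)` is either a
set of `A1` contained in `P1 \ {p_z}`, or of the form `(Q1 \ {p_z}) ∪ Q2` with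
`Q1 ∈ A1` containing `p_z` and `Q2 ∈ A2`. -/
theorem insertion_minimal_sets {α : Type*} (P1 P2 : Set α) (A1 A2 : Set (Set α))
    (pz : α) (hz1 : pz ∈ P1) (hz2 : pz ∉ P2) (hdisj : P1 ∩ P2 = ∅)
    (hA1sub : ∀ A ∈ A1, A ⊆ P1) (hA2sub : ∀ A ∈ A2, A ⊆ P2)
    (hA1mono : ∀ A ∈ A1, ∀ A' : Set α, A ⊆ A' → A' ⊆ P1 → A' ∈ A1)
    (hA2mono : ∀ A ∈ A2, ∀ A' : Set α, A ⊆ A' → A' ⊆ P2 → A' ∈ A2)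
    (A3 : Set (Set α))
    (hA3 : ∀ A : Set α, A ∈ A3 ↔
      (A ∩ P1 ∈ A1 ∨ ((A ∩ P1) ∪ {pz} ∈ A1 ∧ A ∩ P2 ∈ A2)))
    (Q : Set α) (hQsub : Q ⊆ (P1 \ {pz}) ∪ P2)
    (hQmin : Q ∈ A3 ∧ ∀ Q' : Set α, Q' ⊂ Q → Q' ∉ A3) :
    (Q ⊆ P1 \ {pz} ∧ Q ∈ A1) ∨
    (∃ Q1 ∈ A1, pz ∈ Q1 ∧ ∃ Q2 ∈ A2, Q = (Q1 \ {pz}) ∪ Q2) :=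
  insertion_minimal_sets_general P1 P2 A1 A2 pz hz2 A3 hA3 Q hQsub hQmin
end

section
/- For the M-Grid system with n = k² parties in a k×k grid, let quorums be unions of r rows and r columns with r = √(b/2+1) (so 2r² = b+2). If two quorums Q1 (rows R1, columns C1) and Q2 (rows R2, columns C2) have no common row and no common column (R1 ∩ R2 = ∅ and C1 ∩ C2 = ∅), then |Q1 ∩ Q2| ≥ 2r² = b + 2 > b. -/
/-!
If the row sets are disjoint, the cells in the rows of `Q₁` and the columns of `Q₂`, and those in
the rows of `Q₂` and the columns of `Q₁`, form two disjoint `r × r` blocks inside `Q₁ ∩ Q₂`.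
-/

open Finset

section GridQuorum

variable {α β : Type*} [Fintype α] [Fintype β] [DecidableEq α] [DecidableEq β]

def gridQuorum (R : Finset α) (C : Finset β) : Finset (α × β) :=
  univ.filter fun p => p.1 ∈ R ∨ p.2 ∈ C

theorem product_union_product_subset_gridQuorum_inter (R₁ R₂ : Finset α) (C₁ C₂ : Finset β) :
    R₁ ×ˢ C₂ ∪ R₂ ×ˢ C₁ ⊆ gridQuorum R₁ C₁ ∩ gridQuorum R₂ C₂ := by
  intro p hp
  simp only [mem_union, mem_product] at hp
  simp only [gridQuorum, mem_inter, mem_filter, mem_univ, true_and]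
  tauto

theorem card_mul_card_add_card_mul_card_le_card_gridQuorum_inter {R₁ R₂ : Finset α}
    (hR : Disjoint R₁ R₂) (C₁ C₂ : Finset β) :
    #R₁ * #C₂ + #R₂ * #C₁ ≤ #(gridQuorum R₁ C₁ ∩ gridQuorum R₂ C₂) := by
  have hblocks : Disjoint (R₁ ×ˢ C₂) (R₂ ×ˢ C₁) := disjoint_product.mpr (Or.inl hR)
  rw [← card_product, ← card_product, ← card_union_of_disjoint hblocks]
  exact card_le_card (product_union_product_subset_gridQuorum_inter R₁ R₂ C₁ C₂)

end GridQuorum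

theorem mgrid_disjoint_lines_intersection_general (k r b : ℕ)
    (hb : 2 * r ^ 2 = b + 2)
    (R1 C1 R2 C2 : Finset (Fin k))
    (hR1 : R1.card = r) (hC1 : C1.card = r) (hR2 : R2.card = r) (hC2 : C2.card = r)
    (hRdisj : R1 ∩ R2 = ∅) :
    2 * r ^ 2 ≤ ((Finset.univ.filter (fun p : Fin k × Fin k => p.1 ∈ R1 ∨ p.2 ∈ C1)) ∩
        (Finset.univ.filter (fun p : Fin k × Fin k => p.1 ∈ R2 ∨ p.2 ∈ C2))).card ∧
    b < ((Finset.univ.filter (fun p : Fin k × Fin k => p.1 ∈ R1 ∨ p.2 ∈ C1)) ∩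
        (Finset.univ.filter (fun p : Fin k × Fin k => p.1 ∈ R2 ∨ p.2 ∈ C2))).card := by
  have hblocks := card_mul_card_add_card_mul_card_le_card_gridQuorum_inter
    (disjoint_iff_inter_eq_empty.mpr hRdisj) C1 C2
  rw [hR1, hC1, hR2, hC2] at hblocks
  have h : 2 * r ^ 2 ≤ #(gridQuorum R1 C1 ∩ gridQuorum R2 C2) := by linarith
  exact ⟨h, lt_of_lt_of_le (by omega) h⟩

/-- In the M-Grid system, if two quorums (each the union of `r`
rows and `r` columns, with `2r² = b + 2`) share no row and no column, then they
intersect in at least `2r² = b + 2 > b` parties. -/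
theorem mgrid_disjoint_lines_intersection (k r b : ℕ) (hr : 1 ≤ r) (hrk : r ≤ k)
    (hb : 2 * r ^ 2 = b + 2)
    (R1 C1 R2 C2 : Finset (Fin k))
    (hR1 : R1.card = r) (hC1 : C1.card = r) (hR2 : R2.card = r) (hC2 : C2.card = r)
    (hRdisj : R1 ∩ R2 = ∅) (hCdisj : C1 ∩ C2 = ∅) :
    2 * r ^ 2 ≤ ((Finset.univ.filter (fun p : Fin k × Fin k => p.1 ∈ R1 ∨ p.2 ∈ C1)) ∩
        (Finset.univ.filter (fun p : Fin k × Fin k => p.1 ∈ R2 ∨ p.2 ∈ C2))).card ∧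
    b < ((Finset.univ.filter (fun p : Fin k × Fin k => p.1 ∈ R1 ∨ p.2 ∈ C1)) ∩
        (Finset.univ.filter (fun p : Fin k × Fin k => p.1 ∈ R2 ∨ p.2 ∈ C2))).card :=
  mgrid_disjoint_lines_intersection_general k r b hb R1 C1 R2 C2 hR1 hC1 hR2 hC2 hRdisj
end
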